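/- Let λ ∈ ℝ with λ > r̄ := max_{x∈S} r(x), and let μ be a nonzero λ-eigenmeasure of r̃+J̃. Then μ is absolutely continuous with respect to Lebesgue measure, with density u(x) = (∫_S K(y,x) μ(dy)) / (λ − r(x)), which is continuous and strictly positive on S and satisfies r(x)u(x) + ∫_S K(y,x)u(y)dy = λ u(x) for every x ∈ S. -/

import Mathlib

open MeasureTheory Filter Topology

/-- A finite positive Borel measure μ on S is a λ-eigenmeasure of the operator r̃+J̃ if for
every Borel set A ⊆ S one has ∫_A r dμ + ∫_A (∫_S K(y,x) μ(dy)) dx = λ μ(A). -/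
def IsEigenmeasure {d : ℕ} (S : Set (EuclideanSpace ℝ (Fin d)))
    (r : EuclideanSpace ℝ (Fin d) → ℝ)
    (K : EuclideanSpace ℝ (Fin d) → EuclideanSpace ℝ (Fin d) → ℝ)
    (lam : ℝ) (μ : MeasureTheory.Measure (EuclideanSpace ℝ (Fin d))) : Prop :=
  ∀ A : Set (EuclideanSpace ℝ (Fin d)), MeasurableSet A → A ⊆ S →
    (∫ x in A, r x ∂μ) + (∫ x in A, (∫ y in S, K y x ∂μ)) = lam * (μ A).toReal

/-!
On `S` the eigenmeasure identity says that the measures `(λ - r) μ` and `v(x) dx`, where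
`v(x) = ∫_S K(y,x) μ(dy)`, coincide; since `λ - r > 0` on `S`, dividing by it shows that `μ|_S`
has density `u = v / (λ - r)`. Continuity of `K` makes `v`, hence `u`, continuous, and the
eigen-equation is `v = (λ - r) u` rewritten. For positivity: if `u(x) = 0` then `K(·,x) = 0`
`μ`-a.e., so `μ` does not charge `S ∩ B(x, ε₀)`; as every relatively open piece of
`S = closure Ω` has positive volume, `u` vanishes there. So the zero set of `u` is relatively
open and closed in the connected set `S`, and `u ≡ 0` would force `μ = 0`.
-/

open Set Metric ENNReal

theorem IsPreconnected.eqOn_zero_of_eventually_eq_zero {X M : Type*} [TopologicalSpace X]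
    [TopologicalSpace M] [T1Space M] [Zero M] {s : Set X} {f : X → M}
    (hs : IsPreconnected s) (hf : ContinuousOn f s)
    (hzero : ∀ x ∈ s, f x = 0 → ∀ᶠ y in 𝓝[s] x, f y = 0) {x : X} (hx : x ∈ s)
    (hfx : f x = 0) : EqOn f 0 s := by
  intro y hy
  refine (hs.induction₂ (fun a b => f a = 0 ↔ f b = 0) (fun a ha => ?_)
    (fun _ _ _ _ _ _ => Iff.trans) (fun _ _ _ _ => Iff.symm) hx hy).1 hfx
  by_cases hfa : f a = 0
  · filter_upwards [hzero a ha hfa] with b hb using by simp [hfa, hb]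
  · filter_upwards [(hf a ha).tendsto.eventually_ne hfa] with b hb using by simp [hfa, hb]

theorem eqOn_closure_inter_of_ae_eq {X Y : Type*} [TopologicalSpace X] [MeasurableSpace X]
    {ν : Measure X} [ν.IsOpenPosMeasure] [TopologicalSpace Y] [T2Space Y] {Ω U : Set X}
    (hΩ : IsOpen Ω) (hU : IsOpen U) {f g : X → Y} (hf : ContinuousOn f (closure Ω))
    (hg : ContinuousOn g (closure Ω)) (h : f =ᵐ[ν.restrict (Ω ∩ U)] g) :
    EqOn f g (closure Ω ∩ U) := by
  have hsub : Ω ∩ U ⊆ closure Ω := inter_subset_left.trans subset_closure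
  refine (Measure.eqOn_open_of_ae_eq h (hΩ.inter hU) (hf.mono hsub)
    (hg.mono hsub)).of_subset_closure (hf.mono inter_subset_left) (hg.mono inter_subset_left)
    (inter_subset_inter_left _ subset_closure) ?_
  rw [inter_comm, inter_comm Ω]
  exact hU.inter_closure

theorem continuousOn_setIntegral_of_continuousOn_prod {X : Type*} [TopologicalSpace X]
    [FirstCountableTopology X] [T2Space X] [MeasurableSpace X] [OpensMeasurableSpace X]
    {μ : Measure X} [IsFiniteMeasureOnCompacts μ] {S : Set X} (hS : IsCompact S)
    {K : X → X → ℝ} (hK : ContinuousOn (fun q : X × X => K q.1 q.2) (S ×ˢ S)) :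
    ContinuousOn (fun x => ∫ y in S, K y x ∂μ) S := by
  have : IsFiniteMeasure (μ.restrict S) := isFiniteMeasure_restrict.2 hS.measure_lt_top.ne
  obtain ⟨C, hC⟩ := (hS.prod hS).exists_bound_of_continuousOn hK
  refine continuousOn_of_dominated (bound := fun _ => C)
    (fun x hx => (hK.uncurry_right x hx).aestronglyMeasurable hS.measurableSet)
    (fun x hx => (ae_restrict_iff' hS.measurableSet).2 <|
      ae_of_all _ fun y hy => hC (y, x) ⟨hy, hx⟩)
    (integrable_const C)
    ((ae_restrict_iff' hS.measurableSet).2 <| ae_of_all _ fun y hy => hK.uncurry_left y hy)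

section Density

variable {X : Type*} [MeasurableSpace X] {μ ν : Measure X} {S : Set X}

theorem Measure.eq_of_withDensity_eq {w : X → ℝ≥0∞}
    (hwμ : AEMeasurable w μ) (hwν : AEMeasurable w ν)
    (hμ0 : ∀ᵐ x ∂μ, w x ≠ 0) (hμtop : ∀ᵐ x ∂μ, w x ≠ ∞)
    (hν0 : ∀ᵐ x ∂ν, w x ≠ 0) (hνtop : ∀ᵐ x ∂ν, w x ≠ ∞)
    (h : μ.withDensity w = ν.withDensity w) : μ = ν := by
  rw [← withDensity_inv_same₀ hwμ hμ0 hμtop, h, withDensity_inv_same₀ hwν hν0 hνtop]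

theorem withDensity_ofReal_eq_of_forall_setIntegral_eq (hS : MeasurableSet S) {f g : X → ℝ}
    (hf : IntegrableOn f S μ) (hg : IntegrableOn g S ν)
    (hf0 : ∀ x ∈ S, 0 ≤ f x) (hg0 : ∀ x ∈ S, 0 ≤ g x)
    (h : ∀ A, MeasurableSet A → A ⊆ S → ∫ x in A, f x ∂μ = ∫ x in A, g x ∂ν) :
    (μ.restrict S).withDensity (fun x => ENNReal.ofReal (f x)) =
      (ν.restrict S).withDensity (fun x => ENNReal.ofReal (g x)) := by
  ext A hA
  have hAS : A ∩ S ⊆ S := inter_subset_right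
  rw [withDensity_apply _ hA, withDensity_apply _ hA, Measure.restrict_restrict hA,
    Measure.restrict_restrict hA,
    ← ofReal_integral_eq_lintegral_ofReal (hf.mono_set hAS)
      ((ae_restrict_iff' (hA.inter hS)).2 <| ae_of_all _ fun x hx => hf0 x hx.2),
    ← ofReal_integral_eq_lintegral_ofReal (hg.mono_set hAS)
      ((ae_restrict_iff' (hA.inter hS)).2 <| ae_of_all _ fun x hx => hg0 x hx.2),
    h _ (hA.inter hS) hAS]

theorem measure_inter_eq_zero_of_setIntegral_eq_zero (hS : MeasurableSet S) {f : X → ℝ}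
    (hf : IntegrableOn f S μ) (hf0 : ∀ x ∈ S, 0 ≤ f x) {T : Set X}
    (hfT : ∀ x ∈ S ∩ T, 0 < f x) (h : ∫ x in S, f x ∂μ = 0) : μ (S ∩ T) = 0 := by
  have hsupp : μ (Function.support f ∩ S) = 0 := by
    by_contra hne
    refine ((setIntegral_pos_iff_support_of_nonneg_ae ?_ hf).2 (pos_iff_ne_zero.2 hne)).ne' h
    exact (ae_restrict_iff' hS).2 <| ae_of_all _ hf0
  have hsub : S ∩ T ⊆ Function.support f ∩ S := fun x hx => ⟨(hfT x hx).ne', hx.1⟩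
  exact measure_mono_null hsub hsupp

variable {u : X → ℝ}

theorem toReal_measure_eq_setIntegral_of_restrict_eq_withDensity
    (hdens : μ.restrict S = (ν.restrict S).withDensity (fun x => ENNReal.ofReal (u x)))
    (hu : IntegrableOn u S ν) (hu0 : ∀ x ∈ S, 0 ≤ u x) {A : Set X} (hA : MeasurableSet A)
    (hAS : A ⊆ S) : (μ A).toReal = ∫ x in A, u x ∂ν := by
  have hu0A : 0 ≤ᵐ[ν.restrict A] u :=
    (ae_restrict_iff' hA).2 <| ae_of_all _ fun x hx => hu0 x (hAS hx)
  rw [← Measure.restrict_eq_self μ hAS, hdens, withDensity_apply _ hA,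
    Measure.restrict_restrict hA, inter_eq_self_of_subset_left hAS,
    ← ofReal_integral_eq_lintegral_ofReal (hu.mono_set hAS) hu0A,
    ENNReal.toReal_ofReal (integral_nonneg_of_ae hu0A)]

theorem setIntegral_mul_eq_setIntegral_of_restrict_eq_withDensity (hS : MeasurableSet S)
    (hdens : μ.restrict S = (ν.restrict S).withDensity (fun x => ENNReal.ofReal (u x)))
    (hu : AEMeasurable u (ν.restrict S)) (hu0 : ∀ x ∈ S, 0 ≤ u x) (g : X → ℝ) :
    ∫ x in S, g x * u x ∂ν = ∫ x in S, g x ∂μ := by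
  rw [hdens, integral_withDensity_eq_integral_toReal_smul₀ hu.ennreal_ofReal
    (ae_of_all _ fun _ => ENNReal.ofReal_lt_top)]
  refine setIntegral_congr_fun hS fun x hx => ?_
  rw [ENNReal.toReal_ofReal (hu0 x hx), smul_eq_mul, mul_comm]

theorem pos_of_restrict_closure_eq_withDensity [TopologicalSpace X] [OpensMeasurableSpace X]
    [ν.IsOpenPosMeasure] {Ω : Set X} (hΩ : IsOpen Ω) (hconn : IsPreconnected (closure Ω))
    (hdens : μ.restrict (closure Ω) =
      (ν.restrict (closure Ω)).withDensity (fun x => ENNReal.ofReal (u x)))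
    (hu : ContinuousOn u (closure Ω)) (hu0 : ∀ x ∈ closure Ω, 0 ≤ u x)
    (hμ : μ (closure Ω) ≠ 0)
    (hnull : ∀ x ∈ closure Ω, u x = 0 → ∃ U ∈ 𝓝 x, μ (closure Ω ∩ U) = 0) :
    ∀ x ∈ closure Ω, 0 < u x := by
  have hS : MeasurableSet (closure Ω) := measurableSet_closure
  have hzero : ∀ x ∈ closure Ω, u x = 0 → ∀ᶠ y in 𝓝[closure Ω] x, u y = 0 := by
    intro x hx hux
    obtain ⟨U, hU, hμU⟩ := hnull x hx hux
    obtain ⟨V, hVU, hV, hxV⟩ := mem_nhds_iff.1 hU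
    have hdensV : (ν.restrict (closure Ω)).withDensity (fun x => ENNReal.ofReal (u x)) V = 0 := by
      rw [← hdens, Measure.restrict_apply hV.measurableSet, inter_comm]
      exact measure_mono_null (inter_subset_inter_right _ hVU) hμU
    rw [withDensity_apply _ hV.measurableSet,
      lintegral_eq_zero_iff' (hu.aemeasurable hS).ennreal_ofReal.restrict,
      Measure.restrict_restrict hV.measurableSet] at hdensV
    have hsub : Ω ∩ V ⊆ V ∩ closure Ω := fun y hy => ⟨hy.2, subset_closure hy.1⟩
    have hEq := eqOn_closure_inter_of_ae_eq hΩ hV (ENNReal.continuous_ofReal.comp_continuousOn hu)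
      continuousOn_const (ae_restrict_of_ae_restrict_of_subset hsub hdensV)
    filter_upwards [inter_mem_nhdsWithin (closure Ω) (hV.mem_nhds hxV)] with y hy
    exact le_antisymm (ENNReal.ofReal_eq_zero.1 (hEq hy)) (hu0 y hy.1)
  intro x hx
  refine (hu0 x hx).lt_of_ne' fun hux => hμ ?_
  have hEq := hconn.eqOn_zero_of_eventually_eq_zero hu hzero hx hux
  rw [← Measure.restrict_apply_self, hdens, withDensity_apply _ hS, Measure.restrict_restrict hS,
    inter_self, setLIntegral_congr_fun (g := fun _ => 0) hS fun y hy => by simp [hEq hy],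
    lintegral_zero]

end Density

section Eigenmeasure

variable {d : ℕ} {S : Set (EuclideanSpace ℝ (Fin d))} {r : EuclideanSpace ℝ (Fin d) → ℝ}
  {K : EuclideanSpace ℝ (Fin d) → EuclideanSpace ℝ (Fin d) → ℝ} {lam : ℝ}
  {μ : Measure (EuclideanSpace ℝ (Fin d))} [IsFiniteMeasure μ]

theorem IsEigenmeasure.setIntegral_sub_eq (hμ : IsEigenmeasure S r K lam μ)
    (hr : IntegrableOn r S μ) {A : Set (EuclideanSpace ℝ (Fin d))} (hA : MeasurableSet A)
    (hAS : A ⊆ S) : ∫ x in A, (lam - r x) ∂μ = ∫ x in A, ∫ y in S, K y x ∂μ := by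
  rw [integral_sub (integrable_const lam) (hr.mono_set hAS), setIntegral_const, smul_eq_mul,
    measureReal_def]
  linarith [hμ A hA hAS]

theorem IsEigenmeasure.restrict_eq_withDensity (hμ : IsEigenmeasure S r K lam μ)
    (hS : IsCompact S) (hr : ContinuousOn r S) (hlt : ∀ x ∈ S, r x < lam)
    (hv : ContinuousOn (fun x => ∫ y in S, K y x ∂μ) S)
    (hv0 : ∀ x ∈ S, 0 ≤ ∫ y in S, K y x ∂μ) :
    μ.restrict S = (volume.restrict S).withDensity
      (fun x => ENNReal.ofReal ((∫ y in S, K y x ∂μ) / (lam - r x))) := by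
  have hSm := hS.measurableSet
  have hρ : ContinuousOn (fun x => lam - r x) S := continuousOn_const.sub hr
  have hρpos : ∀ x ∈ S, 0 < lam - r x := fun x hx => sub_pos.2 (hlt x hx)
  have hu : ContinuousOn (fun x => (∫ y in S, K y x ∂μ) / (lam - r x)) S :=
    hv.div hρ fun x hx => (hρpos x hx).ne'
  set ν := (volume.restrict S).withDensity
      (fun x => ENNReal.ofReal ((∫ y in S, K y x ∂μ) / (lam - r x)))
  have hνac : ν ≪ volume.restrict S := withDensity_absolutelyContinuous _ _
  have hρne : ∀ᵐ x ∂(volume.restrict S), ENNReal.ofReal (lam - r x) ≠ 0 :=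
    (ae_restrict_iff' hSm).2 <| ae_of_all _ fun x hx => (ENNReal.ofReal_pos.2 (hρpos x hx)).ne'
  refine Measure.eq_of_withDensity_eq (w := fun x => ENNReal.ofReal (lam - r x))
    (hρ.aemeasurable hSm).ennreal_ofReal ((hρ.aemeasurable hSm).ennreal_ofReal.mono_ac hνac)
    ((ae_restrict_iff' hSm).2 <| ae_of_all _ fun x hx => (ENNReal.ofReal_pos.2 (hρpos x hx)).ne')
    (ae_of_all _ fun _ => ENNReal.ofReal_ne_top) (hνac.ae_le hρne)
    (ae_of_all _ fun _ => ENNReal.ofReal_ne_top) ?_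
  calc (μ.restrict S).withDensity (fun x => ENNReal.ofReal (lam - r x))
      = (volume.restrict S).withDensity (fun x => ENNReal.ofReal (∫ y in S, K y x ∂μ)) :=
        withDensity_ofReal_eq_of_forall_setIntegral_eq hSm (hρ.integrableOn_compact hS)
          (hv.integrableOn_compact hS) (fun x hx => (hρpos x hx).le) hv0
          fun A hA hAS => hμ.setIntegral_sub_eq (hr.integrableOn_compact hS) hA hAS
    _ = ν.withDensity (fun x => ENNReal.ofReal (lam - r x)) := by
        rw [← withDensity_mul₀ (hu.aemeasurable hSm).ennreal_ofReal
          (hρ.aemeasurable hSm).ennreal_ofReal]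
        refine withDensity_congr_ae ((ae_restrict_iff' hSm).2 <| ae_of_all _ fun x hx => ?_)
        rw [Pi.mul_apply, ← ENNReal.ofReal_mul (div_nonneg (hv0 x hx) (hρpos x hx).le),
          div_mul_cancel₀ _ (hρpos x hx).ne']

end Eigenmeasure

theorem stmt5_general {d : ℕ}
    (Ω S : Set (EuclideanSpace ℝ (Fin d)))
    (hΩopen : IsOpen Ω)
    (hΩconn : IsConnected Ω) (hSdef : S = closure Ω)
    (hScomp : IsCompact S)
    (r : EuclideanSpace ℝ (Fin d) → ℝ) (hr : ContinuousOn r S)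
    (K : EuclideanSpace ℝ (Fin d) → EuclideanSpace ℝ (Fin d) → ℝ)
    (hK : ContinuousOn (fun q : EuclideanSpace ℝ (Fin d) × EuclideanSpace ℝ (Fin d) =>
      K q.1 q.2) (S ×ˢ S))
    (hKnn : ∀ x ∈ S, ∀ y ∈ S, 0 ≤ K x y)
    (ε₀ c₀ : ℝ) (hε₀ : 0 < ε₀) (hc₀ : 0 < c₀)
    (hKlb : ∀ x ∈ S, ∀ y ∈ S, dist y x < ε₀ → c₀ < K x y)
    (μ : Measure (EuclideanSpace ℝ (Fin d))) [IsFiniteMeasure μ]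
    (hμne : μ ≠ 0) (hμS : μ Sᶜ = 0)
    (lam : ℝ) (hμ : IsEigenmeasure S r K lam μ)
    (rbar : ℝ) (hrbar : IsGreatest (r '' S) rbar) (hlam : rbar < lam) :
    ∀ u : EuclideanSpace ℝ (Fin d) → ℝ,
      (∀ x, u x = (∫ y in S, K y x ∂μ) / (lam - r x)) →
      ContinuousOn u S ∧ (∀ x ∈ S, 0 < u x) ∧
      (∀ A : Set (EuclideanSpace ℝ (Fin d)), MeasurableSet A → A ⊆ S →
        (μ A).toReal = ∫ x in A, u x) ∧
      (∀ x ∈ S, r x * u x + (∫ y in S, K y x * u y) = lam * u x) := by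
  intro u hu
  obtain rfl : u = fun x => (∫ y in S, K y x ∂μ) / (lam - r x) := funext hu
  have hSm : MeasurableSet S := hScomp.measurableSet
  have hρpos : ∀ x ∈ S, 0 < lam - r x := fun x hx =>
    sub_pos.2 ((hrbar.2 (mem_image_of_mem r hx)).trans_lt hlam)
  have hv := continuousOn_setIntegral_of_continuousOn_prod (μ := μ) hScomp hK
  have hv0 : ∀ x ∈ S, 0 ≤ ∫ y in S, K y x ∂μ := fun x hx =>
    setIntegral_nonneg hSm fun y hy => hKnn y hy x hx
  have hucont : ContinuousOn (fun x => (∫ y in S, K y x ∂μ) / (lam - r x)) S :=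
    hv.div (continuousOn_const.sub hr) fun x hx => (hρpos x hx).ne'
  have hu0 : ∀ x ∈ S, 0 ≤ (∫ y in S, K y x ∂μ) / (lam - r x) := fun x hx =>
    div_nonneg (hv0 x hx) (hρpos x hx).le
  have hdens := hμ.restrict_eq_withDensity hScomp hr (fun x hx => sub_pos.1 (hρpos x hx)) hv hv0
  refine ⟨hucont, ?_, fun A hA hAS => toReal_measure_eq_setIntegral_of_restrict_eq_withDensity
    hdens (hucont.integrableOn_compact hScomp) hu0 hA hAS, fun x hx => ?_⟩
  · have hμS0 : μ S ≠ 0 := fun h0 => hμne <| Measure.measure_univ_eq_zero.1 <| by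
      rw [← measure_add_measure_compl hSm, h0, hμS, add_zero]
    subst hSdef
    refine pos_of_restrict_closure_eq_withDensity hΩopen hΩconn.closure.isPreconnected hdens
      hucont hu0 hμS0 fun x hx hux => ⟨ball x ε₀, ball_mem_nhds x hε₀, ?_⟩
    have hvx : ∫ y in closure Ω, K y x ∂μ = 0 :=
      (div_eq_zero_iff.1 hux).resolve_right (hρpos x hx).ne'
    exact measure_inter_eq_zero_of_setIntegral_eq_zero hSm
      ((hK.uncurry_right x hx).integrableOn_compact hScomp) (fun y hy => hKnn y hy x hx)
      (fun y hy => hc₀.trans (hKlb y hy.1 x hx (mem_ball'.1 hy.2))) hvx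
  · rw [setIntegral_mul_eq_setIntegral_of_restrict_eq_withDensity hSm hdens
      (hucont.aemeasurable hSm) hu0]
    field_simp [(hρpos x hx).ne']
    ring

/-- If λ > r̄ = max_S r and μ is a nonzero λ-eigenmeasure of r̃+J̃, then μ has the continuous
strictly positive density u(x) = (∫_S K(y,x) μ(dy)) / (λ − r(x)) with respect to Lebesgue
measure, and u satisfies (r+J)u = λu on S. -/
theorem stmt5 {d : ℕ}
    (Ω S : Set (EuclideanSpace ℝ (Fin d)))
    (hΩne : Ω.Nonempty) (hΩopen : IsOpen Ω) (hΩbdd : Bornology.IsBounded Ω)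
    (hΩconn : IsConnected Ω) (hSdef : S = closure Ω)
    (hScomp : IsCompact S) (hSvol : 0 < volume S)
    (r : EuclideanSpace ℝ (Fin d) → ℝ) (hr : ContinuousOn r S)
    (hrpos : ∀ x ∈ S, 0 < r x)
    (K : EuclideanSpace ℝ (Fin d) → EuclideanSpace ℝ (Fin d) → ℝ)
    (hK : ContinuousOn (fun q : EuclideanSpace ℝ (Fin d) × EuclideanSpace ℝ (Fin d) =>
      K q.1 q.2) (S ×ˢ S))
    (hKnn : ∀ x ∈ S, ∀ y ∈ S, 0 ≤ K x y)
    (ε₀ c₀ : ℝ) (hε₀ : 0 < ε₀) (hc₀ : 0 < c₀)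
    (hKlb : ∀ x ∈ S, ∀ y ∈ S, dist y x < ε₀ → c₀ < K x y)
    (μ : Measure (EuclideanSpace ℝ (Fin d))) [IsFiniteMeasure μ]
    (hμne : μ ≠ 0) (hμS : μ Sᶜ = 0)
    (lam : ℝ) (hμ : IsEigenmeasure S r K lam μ)
    (rbar : ℝ) (hrbar : IsGreatest (r '' S) rbar) (hlam : rbar < lam) :
    ∀ u : EuclideanSpace ℝ (Fin d) → ℝ,
      (∀ x, u x = (∫ y in S, K y x ∂μ) / (lam - r x)) →
      ContinuousOn u S ∧ (∀ x ∈ S, 0 < u x) ∧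
      (∀ A : Set (EuclideanSpace ℝ (Fin d)), MeasurableSet A → A ⊆ S →
        (μ A).toReal = ∫ x in A, u x) ∧
      (∀ x ∈ S, r x * u x + (∫ y in S, K y x * u y) = lam * u x) :=
  stmt5_general Ω S hΩopen hΩconn hSdef hScomp r hr K hK hKnn ε₀ c₀ hε₀ hc₀ hKlb μ hμne hμS lam hμ
    rbar hrbar hlam
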